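/- arXiv:2205.00050 — 3 statements merged into one kernel-verified Lean document; each statement's English description precedes it below -/
import Mathlib

section
/- Let 0 < α < 1 and suppose u is a measurable function with u(x₀) = 0 and u(x) ≥ 0 for a.e. x ≤ x₀, and the integral c_α ℰ(x₀) ∫_{-∞}^{x₀} ((ℰ⁻¹u)(x₀) - (ℰ⁻¹u)(t))/(x₀-t)^{1+α} dt converges absolutely. Then (𝔇_{left,a})^α u(x₀) ≤ 0, with equality if and only if u(x) = 0 for a.e. x ≤ x₀. -/
open MeasureTheory intervalIntegral

set_option maxHeartbeats 1000000 in
theorem stmt3 (a : ℝ → ℝ) (ha : Continuous a) (x₀ : ℝ) (α : ℝ) (hα : 0 < α) (hα1 : α < 1)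
    (u : ℝ → ℝ) (hmeas : Measurable u)
    (E : ℝ → ℝ) (hE : ∀ x, E x = Real.exp (-(∫ y in x₀..x, a y)))
    (hu0 : u x₀ = 0)
    (hpos : ∀ᵐ x ∂(volume.restrict (Set.Iic x₀)), 0 ≤ u x)
    (hint : IntegrableOn
      (fun t => ((E x₀)⁻¹ * u x₀ - (E t)⁻¹ * u t) / (x₀ - t) ^ (1 + α)) (Set.Iio x₀))
    (F : ℝ)
    (hF : F = (1 / |Real.Gamma (-α)|) * E x₀ *
      ∫ t in Set.Iio x₀, ((E x₀)⁻¹ * u x₀ - (E t)⁻¹ * u t) / (x₀ - t) ^ (1 + α)) :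
    F ≤ 0 ∧ (F = 0 ↔ ∀ᵐ x ∂(volume.restrict (Set.Iic x₀)), u x = 0) := by
  have hres : volume.restrict (Set.Iio x₀) = volume.restrict (Set.Iic x₀) :=
    Measure.restrict_congr_set Iio_ae_eq_Iic
  set f : ℝ → ℝ := fun t => ((E x₀)⁻¹ * u x₀ - (E t)⁻¹ * u t) / (x₀ - t) ^ (1 + α) with hf_def
  have hEpos : ∀ x, 0 < E x := fun x => by rw [hE]; exact Real.exp_pos _
  have hΓ : Real.Gamma (-α) ≠ 0 := by
    apply Real.Gamma_ne_zero
    intro n hn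
    have h1 : α = (n : ℝ) := by linarith [neg_eq_iff_eq_neg.mp hn]
    have h2 : (n : ℝ) < 1 := by rw [← h1]; exact hα1
    have h3 : n = 0 := by exact_mod_cast Nat.lt_one_iff.mp (by exact_mod_cast h2)
    rw [h3] at h1; simp at h1; linarith
  have hcpos : 0 < (1 / |Real.Gamma (-α)|) * E x₀ := by
    have := hEpos x₀
    have : 0 < |Real.Gamma (-α)| := abs_pos.mpr hΓ
    positivity
  have hposIio : ∀ᵐ t ∂(volume.restrict (Set.Iio x₀)), 0 ≤ u t := hres ▸ hpos
  have hmem : ∀ᵐ t ∂(volume.restrict (Set.Iio x₀)), t < x₀ := ae_restrict_mem measurableSet_Iio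
  have hfle : ∀ᵐ t ∂(volume.restrict (Set.Iio x₀)), f t ≤ 0 := by
    filter_upwards [hposIio, hmem] with t hu ht
    have hden : (0:ℝ) < (x₀ - t) ^ (1 + α) := Real.rpow_pos_of_pos (by linarith) _
    have hnum : (E x₀)⁻¹ * u x₀ - (E t)⁻¹ * u t ≤ 0 := by
      rw [hu0, mul_zero, zero_sub, neg_nonpos]
      exact mul_nonneg (inv_nonneg.mpr (hEpos t).le) hu
    exact div_nonpos_iff.mpr (Or.inr ⟨hnum, hden.le⟩)
  have hI : (∫ t in Set.Iio x₀, f t) ≤ 0 := integral_nonpos_of_ae hfle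
  refine ⟨by rw [hF]; exact mul_nonpos_of_nonneg_of_nonpos hcpos.le hI, ?_⟩
  have hFI : F = 0 ↔ (∫ t in Set.Iio x₀, f t) = 0 := by
    rw [hF, mul_eq_zero]
    constructor
    · rintro (h | h)
      · exact absurd h (ne_of_gt hcpos)
      · exact h
    · exact Or.inr
  have hneg : Integrable (fun t => -f t) (volume.restrict (Set.Iio x₀)) := hint.neg
  have key : (∫ t in Set.Iio x₀, f t) = 0 ↔
      (fun t => -f t) =ᵐ[volume.restrict (Set.Iio x₀)] 0 := by
    rw [← neg_eq_zero, ← MeasureTheory.integral_neg]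
    have h0 : (0 : ℝ → ℝ) ≤ᵐ[volume.restrict (Set.Iio x₀)] (fun t => -f t) :=
      hfle.mono fun t ht => neg_nonneg.mpr ht
    exact MeasureTheory.integral_eq_zero_iff_of_nonneg_ae h0 hneg
  have key2 : ((fun t => -f t) =ᵐ[volume.restrict (Set.Iio x₀)] 0) ↔
      (∀ᵐ t ∂(volume.restrict (Set.Iio x₀)), u t = 0) := by
    constructor
    · intro h
      filter_upwards [hmem, h] with t ht h0
      have hden : (0:ℝ) < (x₀ - t) ^ (1 + α) := Real.rpow_pos_of_pos (by linarith) _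
      have hf0 : f t = 0 := by simpa [neg_eq_zero] using h0
      have hnum : (E x₀)⁻¹ * u x₀ - (E t)⁻¹ * u t = 0 := by
        rcases div_eq_zero_iff.mp hf0 with h | h
        · exact h
        · exact absurd h (ne_of_gt hden)
      rw [hu0, mul_zero, zero_sub, neg_eq_zero, mul_eq_zero] at hnum
      rcases hnum with h | h
      · exact absurd h (inv_ne_zero (ne_of_gt (hEpos t)))
      · exact h
    · intro h
      filter_upwards [h] with t ht
      simp [hf_def, ht, hu0]
  rw [hFI, key, key2, hres]
end

section
/- Fix α > -1. The polynomials L̃ₙ^α(x) = (e^{-x} x^α / n!) dⁿ/dxⁿ (e^x x^{n-α}) (for x > 0) satisfy the three-term recurrence (n+1) L̃_{n+1} + (α - 1 - x - 2n) L̃ₙ + (n - α) L̃_{n-1} = 0 for n ≥ 1, with L̃₀ = 1 and L̃₋₁ = 0. -/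
/-!
Write `f_c(y) = e^y y^c` and `g_n = Dⁿ f_{n-α}`, so that `L̃ₙ = e^{-x} x^α gₙ / n!`. Two identities
on `(0, ∞)` drive the recurrence: `y f_c = f_{c+1}`, which with Leibniz's rule gives
`D^{k+1} f_{c+1} = x D^{k+1} f_c + (k+1) D^k f_c`, and `f_c' = f_c + c f_{c-1}`. Eliminating the
mixed terms yields `g_{n+1} = (x + 2n + 1 - α) gₙ - n (n - α) g_{n-1}`.
-/

open Finset Topology

theorem iteratedDeriv_succ_id_mul {𝕜 : Type*} [NontriviallyNormedField 𝕜] {h : 𝕜 → 𝕜} {x : 𝕜}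
    {k : ℕ} (hh : ContDiffAt 𝕜 (k + 1 : ℕ) h x) :
    iteratedDeriv (k + 1) (fun y => y * h y) x
      = x * iteratedDeriv (k + 1) h x + (k + 1) * iteratedDeriv k h x := by
  rw [iteratedDeriv_fun_mul contDiffAt_fun_id hh, sum_range_succ', sum_range_succ']
  have hid : ∀ i, iteratedDeriv (i + 2) (fun y : 𝕜 => y) x = 0 := fun i => by
    simp [iteratedDeriv_fun_id]
  simp only [hid, mul_zero, zero_mul, sum_const_zero, zero_add, Nat.choose_one_right,
    Nat.choose_zero_right, iteratedDeriv_one, iteratedDeriv_zero, deriv_id'', add_tsub_cancel_right,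
    tsub_zero, Nat.cast_add, Nat.cast_one, mul_one, one_mul]
  ring

theorem contDiffAt_exp_mul_rpow {n : WithTop ℕ∞} (c : ℝ) {x : ℝ} (hx : 0 < x) :
    ContDiffAt ℝ n (fun y => Real.exp y * y ^ c) x :=
  Real.contDiff_exp.contDiffAt.mul (Real.contDiffAt_rpow_const_of_ne hx.ne')

theorem iteratedDeriv_exp_mul_rpow_add_one (c : ℝ) (k : ℕ) {x : ℝ} (hx : 0 < x) :
    iteratedDeriv (k + 1) (fun y => Real.exp y * y ^ (c + 1)) x
      = x * iteratedDeriv (k + 1) (fun y => Real.exp y * y ^ c) x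
        + (k + 1) * iteratedDeriv k (fun y => Real.exp y * y ^ c) x := by
  have hmul : (fun y => Real.exp y * y ^ (c + 1)) =ᶠ[𝓝 x]
      fun y => y * (Real.exp y * y ^ c) := by
    filter_upwards [Ioi_mem_nhds hx] with y hy
    rw [Real.rpow_add_one (ne_of_gt hy)]
    ring
  rw [hmul.iteratedDeriv_eq, iteratedDeriv_succ_id_mul (contDiffAt_exp_mul_rpow c hx)]

theorem iteratedDeriv_succ_exp_mul_rpow (c : ℝ) (k : ℕ) {x : ℝ} (hx : 0 < x) :
    iteratedDeriv (k + 1) (fun y => Real.exp y * y ^ c) x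
      = iteratedDeriv k (fun y => Real.exp y * y ^ c) x
        + c * iteratedDeriv k (fun y => Real.exp y * y ^ (c - 1)) x := by
  have hderiv : deriv (fun y => Real.exp y * y ^ c) =ᶠ[𝓝 x]
      fun y => Real.exp y * y ^ c + c * (Real.exp y * y ^ (c - 1)) := by
    filter_upwards [Ioi_mem_nhds hx] with y hy
    rw [((Real.hasDerivAt_exp y).fun_mul (Real.hasDerivAt_rpow_const (Or.inl (ne_of_gt hy)))).deriv]
    ring
  rw [iteratedDeriv_succ', hderiv.iteratedDeriv_eq, iteratedDeriv_fun_add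
    (contDiffAt_exp_mul_rpow c hx) (contDiffAt_const.mul (contDiffAt_exp_mul_rpow _ hx)),
    iteratedDeriv_const_mul_field]

theorem iteratedDeriv_exp_mul_rpow_three_term (b : ℝ) (m : ℕ) {x : ℝ} (hx : 0 < x) :
    iteratedDeriv (m + 2) (fun y => Real.exp y * y ^ (b + 2)) x
      = (x + m + b + 3) * iteratedDeriv (m + 1) (fun y => Real.exp y * y ^ (b + 1)) x
        - (m + 1) * (b + 1) * iteratedDeriv m (fun y => Real.exp y * y ^ b) x := by
  have h₁ := iteratedDeriv_exp_mul_rpow_add_one (b + 1) (m + 1) hx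
  have h₂ := iteratedDeriv_succ_exp_mul_rpow (b + 1) (m + 1) hx
  have h₃ := iteratedDeriv_exp_mul_rpow_add_one b m hx
  rw [add_sub_cancel_right] at h₂
  rw [show b + 2 = b + 1 + 1 by ring, h₁, h₂]
  push_cast at h₁ h₃ ⊢
  linear_combination (-(b + 1)) * h₃

theorem stmt11_general (α : ℝ) (L : ℕ → ℝ → ℝ)
    (hL : ∀ n x, L n x = Real.exp (-x) * x ^ α / (n.factorial : ℝ) *
      iteratedDeriv n (fun y => Real.exp y * y ^ ((n : ℝ) - α)) x) :
    (∀ x : ℝ, 0 < x → L 0 x = 1) ∧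
    ∀ n : ℕ, 1 ≤ n → ∀ x : ℝ, 0 < x →
      ((n : ℝ) + 1) * L (n + 1) x + (α - 1 - x - 2 * n) * L n x
        + ((n : ℝ) - α) * L (n - 1) x = 0 := by
  refine ⟨fun x hx => ?_, fun n hn x hx => ?_⟩
  · rw [hL, iteratedDeriv_zero, Nat.cast_zero, zero_sub, Real.rpow_neg hx.le]
    field_simp
    rw [← Real.exp_add]
    simp
  · obtain ⟨m, rfl⟩ := Nat.exists_eq_add_of_le' hn
    rw [Nat.add_sub_cancel, hL, hL, hL,
      show ((m + 1 + 1 : ℕ) : ℝ) - α = (m - α) + 2 by push_cast; ring,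
      show ((m + 1 : ℕ) : ℝ) - α = (m - α) + 1 by push_cast; ring,
      Nat.factorial_succ, Nat.factorial_succ]
    have hrec := iteratedDeriv_exp_mul_rpow_three_term ((m : ℝ) - α) m hx
    push_cast
    field_simp
    linear_combination Real.exp (-x) * x ^ α * hrec

theorem stmt11 (α : ℝ) (hα : -1 < α) (L : ℕ → ℝ → ℝ)
    (hL : ∀ n x, L n x = Real.exp (-x) * x ^ α / (n.factorial : ℝ) *
      iteratedDeriv n (fun y => Real.exp y * y ^ ((n : ℝ) - α)) x) :
    (∀ x : ℝ, 0 < x → L 0 x = 1) ∧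
    ∀ n : ℕ, 1 ≤ n → ∀ x : ℝ, 0 < x →
      ((n : ℝ) + 1) * L (n + 1) x + (α - 1 - x - 2 * n) * L n x
        + ((n : ℝ) - α) * L (n - 1) x = 0 :=
  stmt11_general α L hL
end

section
/- Fix α, β > -1. Each inverse Jacobi polynomial P̃ₙ^{α,β} is an eigenfunction of 𝒢̃_{α,β} = (1-x²) d²/dx² + ((α-β) + (α+β-2)x) d/dx with eigenvalue -n(n - α - β + 1); that is, (1-x²)(P̃ₙ^{α,β})''(x) + ((α-β) + (α+β-2)x)(P̃ₙ^{α,β})'(x) = -n(n-α-β+1) P̃ₙ^{α,β}(x) for x ∈ (-1,1). -/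
open scoped ContDiff

noncomputable def waux (a b : ℝ) : ℝ → ℝ := fun y => (1 - y) ^ a * (1 + y) ^ b

lemma derivEq {f g : ℝ → ℝ} {L R x : ℝ} (hx : x ∈ Set.Ioo (-1:ℝ) 1)
    (hf : HasDerivAt f L x) (hg : HasDerivAt g R x)
    (h : ∀ y ∈ Set.Ioo (-1:ℝ) 1, f y = g y) : L = R := by
  have hev : f =ᶠ[nhds x] g := Filter.eventuallyEq_of_mem (isOpen_Ioo.mem_nhds hx) h
  exact (hf.congr_of_eventuallyEq hev.symm).unique hg

lemma waux_contDiffOn (a b : ℝ) (k : ℕ) :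
    ContDiffOn ℝ ∞ (deriv^[k] (waux a b)) (Set.Ioo (-1:ℝ) 1) := by
  induction k with
  | zero =>
    simp only [Function.iterate_zero, id]
    intro x hx
    have h1 : ContDiffAt ℝ ∞ (fun y : ℝ => (1 - y) ^ a) x :=
      ((contDiff_const.sub contDiff_id).contDiffAt).rpow_const_of_ne
        (by simp only [id_eq]; nlinarith [hx.1, hx.2])
    have h2 : ContDiffAt ℝ ∞ (fun y : ℝ => (1 + y) ^ b) x :=
      ((contDiff_const.add contDiff_id).contDiffAt).rpow_const_of_ne
        (by simp only [id_eq]; nlinarith [hx.1, hx.2])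
    exact (h1.mul h2).contDiffWithinAt
  | succ k ih =>
    rw [Function.iterate_succ']
    exact ih.deriv_of_isOpen isOpen_Ioo (le_of_eq rfl)

lemma waux_hasDerivAt_iter (a b : ℝ) (k : ℕ) {x : ℝ} (hx : x ∈ Set.Ioo (-1:ℝ) 1) :
    HasDerivAt (deriv^[k] (waux a b)) (deriv^[k+1] (waux a b) x) x := by
  have h := (waux_contDiffOn a b k).differentiableOn (by norm_num)
  have hd : DifferentiableAt ℝ (deriv^[k] (waux a b)) x :=
    h.differentiableAt (isOpen_Ioo.mem_nhds hx)
  have := hd.hasDerivAt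
  rwa [show deriv^[k+1] (waux a b) = deriv (deriv^[k] (waux a b)) from
    Function.iterate_succ_apply' deriv k _]

lemma waux_deriv_eq (a b : ℝ) {x : ℝ} (hx : x ∈ Set.Ioo (-1:ℝ) 1) :
    (1 - x^2) * deriv^[1] (waux a b) x = ((b - a) - (a + b)*x) * waux a b x := by
  have h1m : (0:ℝ) < 1 - x := by linarith [hx.2]
  have h1p : (0:ℝ) < 1 + x := by linarith [hx.1]
  have hf : HasDerivAt (fun y : ℝ => (1 - y) ^ a) ((-1) * a * (1-x)^(a-1)) x :=
    ((hasDerivAt_id x).const_sub 1).rpow_const (Or.inl h1m.ne')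
  have hg : HasDerivAt (fun y : ℝ => (1 + y) ^ b) (1 * b * (1+x)^(b-1)) x :=
    ((hasDerivAt_id x).const_add 1).rpow_const (Or.inl h1p.ne')
  have hw : HasDerivAt (waux a b)
      ((-1) * a * (1-x)^(a-1) * ((1+x)^b) + ((1-x)^a) * (1 * b * (1+x)^(b-1))) x := hf.mul hg
  rw [show deriv^[1] (waux a b) x = deriv (waux a b) x from rfl, hw.deriv]
  have e1 : (1-x)^(a-1) * (1-x) = (1-x)^a := by
    rw [← Real.rpow_add_one h1m.ne']; norm_num
  have e2 : (1+x)^(b-1) * (1+x) = (1+x)^b := by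
    rw [← Real.rpow_add_one h1p.ne']; norm_num
  simp only [waux]
  linear_combination ((-a) * (1+x) * ((1+x):ℝ)^b) * e1 + (b * (1-x) * ((1-x):ℝ)^a) * e2

lemma waux_rec (a b : ℝ) (k : ℕ) : ∀ x ∈ Set.Ioo (-1:ℝ) 1,
    (1 - x^2) * deriv^[k+2] (waux a b) x
      = ((b - a) + (2*((k:ℝ)+1) - (a+b))*x) * deriv^[k+1] (waux a b) x
        + (((k:ℝ)+1)*((k:ℝ) - (a+b))) * deriv^[k] (waux a b) x := by
  induction k with
  | zero =>
    intro x hx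
    have hp : HasDerivAt (fun y : ℝ => 1 - y^2) (-(2*x^1)) x :=
      (hasDerivAt_pow 2 x).const_sub 1
    have hL := hp.mul (waux_hasDerivAt_iter a b 1 hx)
    have hq : HasDerivAt (fun y : ℝ => (b - a) - (a + b)*y) (-((a+b)*1)) x :=
      ((hasDerivAt_id x).const_mul (a+b)).const_sub (b-a)
    have hR := hq.mul (waux_hasDerivAt_iter a b 0 hx)
    have key := derivEq hx hL hR (fun y hy => waux_deriv_eq a b hy)
    simp only [show (1+1 : ℕ) = 0+2 from rfl, show (0+1 : ℕ) = 1 from rfl,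
      Function.iterate_zero_apply] at key ⊢
    push_cast
    linear_combination key
  | succ k ih =>
    intro x hx
    have hp : HasDerivAt (fun y : ℝ => 1 - y^2) (-(2*x^1)) x :=
      (hasDerivAt_pow 2 x).const_sub 1
    have hL := hp.mul (waux_hasDerivAt_iter a b (k+2) hx)
    have hq : HasDerivAt (fun y : ℝ => (b - a) + (2*((k:ℝ)+1) - (a+b))*y)
        (0 + (2*((k:ℝ)+1) - (a+b))*1) x :=
      (hasDerivAt_const x (b-a)).add ((hasDerivAt_id x).const_mul _)
    have hR1 := hq.mul (waux_hasDerivAt_iter a b (k+1) hx)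
    have hR2 := (waux_hasDerivAt_iter a b k hx).const_mul (((k:ℝ)+1)*((k:ℝ) - (a+b)))
    have hR := hR1.add hR2
    have key := derivEq hx hL hR ih
    simp only [show (k+2+1 : ℕ) = k+1+2 from rfl, show (k+1+1 : ℕ) = k+1+1 from rfl] at key ⊢
    push_cast
    linear_combination key

theorem stmt17 (α β : ℝ) (hα : -1 < α) (hβ : -1 < β) (n : ℕ) (P : ℝ → ℝ)
    (hP : ∀ x, P x = (-1) ^ n / (2 ^ n * (n.factorial : ℝ)) *
      ((1 - x) ^ α * (1 + x) ^ β) *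
      iteratedDeriv n (fun y => (1 - y) ^ ((n : ℝ) - α) * (1 + y) ^ ((n : ℝ) - β)) x) :
    ∀ x ∈ Set.Ioo (-1 : ℝ) 1,
      (1 - x ^ 2) * deriv (deriv P) x + ((α - β) + (α + β - 2) * x) * deriv P x
        = -(n : ℝ) * ((n : ℝ) - α - β + 1) * P x := by
  intro x hx
  have hne : (1 - x^2) ≠ 0 := by nlinarith [hx.1, hx.2]
  set c : ℝ := (-1) ^ n / (2 ^ n * (n.factorial : ℝ)) with hc
  set W : ℝ → ℝ := waux ((n:ℝ) - α) ((n:ℝ) - β) with hW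
  set ρ : ℝ → ℝ := waux α β with hρdef
  have hPf : P = fun y => c * (ρ y * deriv^[n] W y) := by
    funext y
    rw [hP y]
    simp only [iteratedDeriv_eq_iterate]
    show c * ((1 - y) ^ α * (1 + y) ^ β) * deriv^[n] W y
      = c * (waux α β y * deriv^[n] W y)
    simp only [waux]
    ring
  have hDP : ∀ y ∈ Set.Ioo (-1:ℝ) 1, deriv P y
      = c * (deriv^[1] ρ y * deriv^[n] W y + ρ y * deriv^[n+1] W y) := by
    intro y hy
    have hr : HasDerivAt ρ (deriv^[1] ρ y) y := waux_hasDerivAt_iter α β 0 hy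
    have hw : HasDerivAt (deriv^[n] W) (deriv^[n+1] W y) y :=
      waux_hasDerivAt_iter _ _ n hy
    have hPd : HasDerivAt P (c * (deriv^[1] ρ y * deriv^[n] W y + ρ y * deriv^[n+1] W y)) y := by
      rw [hPf]; exact (hr.mul hw).const_mul c
    exact hPd.deriv
  have hD2 : deriv (deriv P) x
      = c * ((deriv^[2] ρ x * deriv^[n] W x + deriv^[1] ρ x * deriv^[n+1] W x)
          + (deriv^[1] ρ x * deriv^[n+1] W x + ρ x * deriv^[n+2] W x)) := by
    have hev : deriv P =ᶠ[nhds x]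
        (fun y => c * (deriv^[1] ρ y * deriv^[n] W y + ρ y * deriv^[n+1] W y)) :=
      Filter.eventuallyEq_of_mem (isOpen_Ioo.mem_nhds hx) hDP
    rw [hev.deriv_eq]
    have h1 : HasDerivAt (deriv^[1] ρ) (deriv^[2] ρ x) x := waux_hasDerivAt_iter α β 1 hx
    have h0 : HasDerivAt ρ (deriv^[1] ρ x) x := waux_hasDerivAt_iter α β 0 hx
    have hn0 : HasDerivAt (deriv^[n] W) (deriv^[n+1] W x) x := waux_hasDerivAt_iter _ _ n hx
    have hn1 : HasDerivAt (deriv^[n+1] W) (deriv^[n+2] W x) x := waux_hasDerivAt_iter _ _ (n+1) hx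
    exact (((h1.mul hn0).add (h0.mul hn1)).const_mul c).deriv
  have hI1 := waux_rec ((n:ℝ) - α) ((n:ℝ) - β) n x hx
  have hI3 := waux_rec α β 0 x hx
  simp only [zero_add, Nat.cast_zero, Function.iterate_zero_apply] at hI3
  have hI3' : deriv^[2] ρ x
      = (((β - α) + (2*((0:ℝ)+1) - (α+β))*x) * deriv^[1] ρ x
          + (((0:ℝ)+1)*((0:ℝ) - (α+β))) * ρ x) / (1 - x^2) := by
    rw [eq_div_iff hne]; linear_combination hI3
  have hI1' : deriv^[n+2] W x
      = ((((n:ℝ) - β - ((n:ℝ) - α)) + (2*((n:ℝ)+1) - (((n:ℝ) - α)+((n:ℝ) - β)))*x)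
            * deriv^[n+1] W x
          + (((n:ℝ)+1)*((n:ℝ) - (((n:ℝ) - α)+((n:ℝ) - β)))) * deriv^[n] W x) / (1 - x^2) := by
    rw [eq_div_iff hne]; linear_combination hI1
  have hI2 := waux_deriv_eq α β hx
  have hI2' : deriv^[1] ρ x = ((β - α) - (α + β)*x) * ρ x / (1 - x^2) := by
    rw [eq_div_iff hne]; linear_combination hI2
  have hPx : P x = c * (ρ x * deriv^[n] W x) := by rw [hPf]
  rw [hDP x hx, hD2, hPx, hI1', hI3', hI2']
  field_simp
  ring
end
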